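/- Let X be a metric space, T : X → X, and R ⊆ X × X nonempty. T is a Meir-Keeler type mapping on R if and only if there exists a function l : (0,∞) → [0,∞) of type (L) such that d(Tx,Ty) < l(d(x,y)) for all (x,y) ∈ R with x ≠ y. -/

import Mathlib

/-!
For each `ε > 0` the Meir-Keeler condition gives `δ(ε) > 0` such that pairs at distance in
`[ε, ε + δ(ε))` are mapped to pairs at distance `< ε`. These half-open intervals cover `(0, ∞)`,
and since the Sorgenfrey line is Lindelöf, countably many of them, `[εₙ, εₙ + δ(εₙ))`, already do.
Put `l(t) = εₙ` for the least `n` with `t ∈ [εₙ, εₙ + δ(εₙ))`. Just to the right of `s` only the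
finitely many intervals of index at most that of `s` compete, and each of them either starts at or
before `s` or starts beyond every `t` close enough to `s`; so `l(t) ≤ s` there, which is type (L).
-/

open scoped NNReal

open Set Filter Topology

section IcoCover

variable {α : Type*} [LinearOrder α] [TopologicalSpace α] [OrderTopology α]

theorem Set.exists_countable_subset_Ico_cover [SecondCountableTopology α] {s : Set α}
    {b : α → α} (hb : ∀ a ∈ s, a < b a) :
    ∃ t ⊆ s, t.Countable ∧ s ⊆ ⋃ a ∈ t, Ico a (b a) := by
  obtain ⟨t, hts, htc, ht⟩ :=
    TopologicalSpace.isOpen_biUnion_countable s (fun a => Ioo a (b a)) fun _ _ => isOpen_Ioo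
  set U := ⋃ a ∈ s, Ioo a (b a)
  -- The points of `s` missed by the open intervals have pairwise disjoint intervals `(a, b a)`.
  have hdisj : (s \ U).PairwiseDisjoint fun a => Ioo a (b a) := by
    intro a ha c hc hac
    wlog hlt : a < c generalizing a c
    · exact (this hc ha hac.symm (lt_of_le_of_ne (not_lt.1 hlt) hac.symm)).symm
    have hbc : b a ≤ c := by
      by_contra! h
      exact hc.2 (mem_biUnion ha.1 ⟨hlt, h⟩)
    exact disjoint_left.2 fun z hza hzc => (hza.2.trans_le hbc).not_gt hzc.1
  refine ⟨t ∪ (s \ U), union_subset hts sdiff_subset,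
    htc.union (hdisj.countable_of_Ioo fun a ha => hb a ha.1), fun a ha => ?_⟩
  by_cases haU : a ∈ U
  · rw [← ht] at haU
    obtain ⟨c, hc, hac⟩ := mem_iUnion₂.1 haU
    exact mem_biUnion (Or.inl hc) (Ioo_subset_Ico_self hac)
  · exact mem_biUnion (Or.inr ⟨ha, haU⟩) ⟨le_rfl, hb a ha⟩

theorem exists_eventually_le_of_seq_Ico_cover {s : Set α} (f : ℕ → α) (b : α → α)
    (hf : s ⊆ ⋃ n, Ico (f n) (b (f n))) :
    ∃ l : α → α, (∀ x ∈ s, l x ∈ range f ∧ l x ≤ x ∧ x < b (l x)) ∧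
      ∀ x ∈ s, ∀ᶠ y in 𝓝[≥] x, l y ≤ x := by
  classical
  let l y := if h : ∃ n, y ∈ Ico (f n) (b (f n)) then f (Nat.find h) else y
  have hl : ∀ y (h : ∃ n, y ∈ Ico (f n) (b (f n))), l y = f (Nat.find h) := fun y h => dif_pos h
  refine ⟨l, fun x hx => ?_, fun x hx => ?_⟩
  · have hx := mem_iUnion.1 (hf hx)
    rw [hl x hx]
    exact ⟨mem_range_self _, Nat.find_spec hx⟩
  have hx := mem_iUnion.1 (hf hx)
  set N := Nat.find hx
  have h_right : ∀ᶠ y in 𝓝 x, y < b (f N) := eventually_lt_nhds (Nat.find_spec hx).2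
  have h_left : ∀ᶠ y in 𝓝 x, ∀ n ∈ Iic N, f n ≤ x ∨ y < f n := by
    refine (eventually_all_finite (finite_Iic N)).2 fun n _ => ?_
    rcases le_or_gt (f n) x with h | h
    · exact Eventually.of_forall fun _ => Or.inl h
    · exact (eventually_lt_nhds h).mono fun _ => Or.inr
  filter_upwards [nhdsWithin_le_nhds h_right, nhdsWithin_le_nhds h_left, self_mem_nhdsWithin]
    with y hyN hy (hxy : x ≤ y)
  have hNy : y ∈ Ico (f N) (b (f N)) := ⟨(Nat.find_spec hx).1.trans hxy, hyN⟩
  have hy' : ∃ n, y ∈ Ico (f n) (b (f n)) := ⟨N, hNy⟩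
  rw [hl y hy']
  exact (hy _ (Nat.find_min' hy' hNy)).resolve_right (not_lt.2 (Nat.find_spec hy').1)

end IcoCover

theorem NNReal.exists_forall_Icc_of_eventually_nhdsGE {p : ℝ≥0 → Prop} {s : ℝ≥0}
    (h : ∀ᶠ t in 𝓝[≥] s, p t) : ∃ δ : ℝ≥0, 0 < δ ∧ ∀ t, s ≤ t → t ≤ s + δ → p t := by
  obtain ⟨u, hsu, hu⟩ := mem_nhdsGE_iff_exists_Icc_subset.1 h
  refine ⟨u - s, tsub_pos_of_lt hsu, fun t hst htu => hu ⟨hst, ?_⟩⟩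
  rwa [add_tsub_cancel_of_le hsu.le] at htu

def IsMeirKeelerOn {X : Type*} [PseudoMetricSpace X] (T : X → X) (R : Set (X × X)) : Prop :=
  ∀ ε : ℝ, 0 < ε → ∃ δ : ℝ, 0 < δ ∧ ∀ p : X × X, p ∈ R →
    ε ≤ dist p.1 p.2 → dist p.1 p.2 < ε + δ → dist (T p.1) (T p.2) < ε

def NNReal.IsTypeL (l : ℝ≥0 → ℝ≥0) : Prop :=
  ∀ s : ℝ≥0, 0 < s → ∃ δ : ℝ≥0, 0 < δ ∧ ∀ t, s ≤ t → t ≤ s + δ → l t ≤ s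

theorem NNReal.exists_isTypeL_selection (Δ : ℝ≥0 → ℝ≥0) (hΔ : ∀ ε, 0 < ε → 0 < Δ ε) :
    ∃ l, IsTypeL l ∧ ∀ t, 0 < t → 0 < l t ∧ l t ≤ t ∧ t < l t + Δ (l t) := by
  obtain ⟨D, hD, hDc, hDcover⟩ := (Ioi (0 : ℝ≥0)).exists_countable_subset_Ico_cover
    (b := fun ε => ε + Δ ε) fun ε hε => lt_add_of_pos_right ε (hΔ ε hε)
  have hDne : D.Nonempty := by
    obtain ⟨ε, hε, -⟩ := mem_iUnion₂.1 (hDcover (mem_Ioi.2 one_pos))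
    exact ⟨ε, hε⟩
  obtain ⟨f, rfl⟩ := hDc.exists_eq_range hDne
  obtain ⟨l, hl, hlL⟩ := exists_eventually_le_of_seq_Ico_cover f (fun ε => ε + Δ ε)
    (hDcover.trans (biUnion_range.le))
  refine ⟨l, fun s hs => exists_forall_Icc_of_eventually_nhdsGE (hlL s hs), fun t ht => ?_⟩
  obtain ⟨hlf, hlt⟩ := hl t ht
  exact ⟨hD hlf, hlt⟩

section MeirKeeler

variable {X : Type*} {T : X → X} {R : Set (X × X)}

theorem IsMeirKeelerOn.exists_nnreal_modulus [PseudoMetricSpace X] (h : IsMeirKeelerOn T R) :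
    ∃ Δ : ℝ≥0 → ℝ≥0, (∀ ε, 0 < ε → 0 < Δ ε) ∧ ∀ ε, 0 < ε → ∀ p ∈ R,
      ε ≤ nndist p.1 p.2 → nndist p.1 p.2 < ε + Δ ε → nndist (T p.1) (T p.2) < ε := by
  have : ∀ ε : ℝ≥0, 0 < ε → ∃ δ : ℝ≥0, 0 < δ ∧ ∀ p ∈ R,
      ε ≤ nndist p.1 p.2 → nndist p.1 p.2 < ε + δ → nndist (T p.1) (T p.2) < ε := by
    intro ε hε
    obtain ⟨δ, hδ, H⟩ := h ε hε
    lift δ to ℝ≥0 using hδ.le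
    refine ⟨δ, mod_cast hδ, fun p hp h₁ h₂ => ?_⟩
    rw [← NNReal.coe_lt_coe, coe_nndist]
    exact H p hp (by rwa [← coe_nndist, NNReal.coe_le_coe])
      (by rwa [← coe_nndist, ← NNReal.coe_add, NNReal.coe_lt_coe])
  choose! Δ hΔ using this
  exact ⟨Δ, fun ε hε => (hΔ ε hε).1, fun ε hε => (hΔ ε hε).2⟩

theorem IsMeirKeelerOn.exists_isTypeL [MetricSpace X] (h : IsMeirKeelerOn T R) :
    ∃ l, NNReal.IsTypeL l ∧ ∀ p ∈ R, p.1 ≠ p.2 → nndist (T p.1) (T p.2) < l (nndist p.1 p.2) := by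
  obtain ⟨Δ, hΔpos, hΔ⟩ := h.exists_nnreal_modulus
  obtain ⟨l, hlL, hl⟩ := NNReal.exists_isTypeL_selection Δ hΔpos
  refine ⟨l, hlL, fun p hp hne => ?_⟩
  obtain ⟨hpos, hle, hlt⟩ := hl _ (pos_iff_ne_zero.2 (mt nndist_eq_zero.1 hne))
  exact hΔ _ hpos p hp hle hlt

theorem isMeirKeelerOn_of_isTypeL [PseudoMetricSpace X] {l : ℝ≥0 → ℝ≥0} (hl : NNReal.IsTypeL l)
    (hT : ∀ p ∈ R, p.1 ≠ p.2 → nndist (T p.1) (T p.2) < l (nndist p.1 p.2)) :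
    IsMeirKeelerOn T R := by
  intro ε hε
  lift ε to ℝ≥0 using hε.le
  obtain ⟨δ, hδ, hδl⟩ := hl ε (mod_cast hε)
  refine ⟨δ, mod_cast hδ, fun p hp h₁ h₂ => ?_⟩
  have hne : p.1 ≠ p.2 := by
    rintro h
    rw [h, dist_self] at h₁
    exact h₁.not_gt hε
  rw [← coe_nndist] at h₁ h₂ ⊢
  exact_mod_cast (hT p hp hne).trans_le (hδl _ (mod_cast h₁) (mod_cast h₂.le))

end MeirKeeler

theorem MK_iff_Lim_metric_general {X : Type*} [MetricSpace X] (T : X → X)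
    (R : Set (X × X)) :
    (∀ ε : ℝ, 0 < ε → ∃ δ : ℝ, 0 < δ ∧ ∀ p : X × X, p ∈ R →
        ε ≤ dist p.1 p.2 → dist p.1 p.2 < ε + δ → dist (T p.1) (T p.2) < ε) ↔
      (∃ l : ℝ≥0 → ℝ≥0,
        (∀ s : ℝ≥0, 0 < s → ∃ δ : ℝ≥0, 0 < δ ∧ ∀ t, s ≤ t → t ≤ s + δ → l t ≤ s) ∧
        ∀ p : X × X, p ∈ R → p.1 ≠ p.2 →
          nndist (T p.1) (T p.2) < l (nndist p.1 p.2)) :=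
  ⟨IsMeirKeelerOn.exists_isTypeL, fun ⟨_, hl, hT⟩ => isMeirKeelerOn_of_isTypeL hl hT⟩

theorem MK_iff_Lim_metric {X : Type*} [MetricSpace X] (T : X → X)
    (R : Set (X × X)) (hR : R.Nonempty) :
    (∀ ε : ℝ, 0 < ε → ∃ δ : ℝ, 0 < δ ∧ ∀ p : X × X, p ∈ R →
        ε ≤ dist p.1 p.2 → dist p.1 p.2 < ε + δ → dist (T p.1) (T p.2) < ε) ↔
      (∃ l : ℝ≥0 → ℝ≥0,
        (∀ s : ℝ≥0, 0 < s → ∃ δ : ℝ≥0, 0 < δ ∧ ∀ t, s ≤ t → t ≤ s + δ → l t ≤ s) ∧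
        ∀ p : X × X, p ∈ R → p.1 ≠ p.2 →
          nndist (T p.1) (T p.2) < l (nndist p.1 p.2)) :=
  MK_iff_Lim_metric_general T R
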